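/- Let (𝒳, d_X) and (𝒴, d_Y) be MCMSs, let Z be a metric space, let k ≥ 1 be an integer, and let ℓ_X : X → Z and ℓ_Y : Y → Z be label functions satisfying the stability inequality: for all γ ∈ 𝒞(μ_X, μ_Y) and all ν^{(k)} ∈ 𝒞^{(k)}(m^X, m^Y), Σ_{(x,y)} Σ_{(x',y')} d_Z(ℓ_X(x'), ℓ_Y(y')) ν^{(k)}_{x,y}(x',y') γ(x,y) ≤ dis^{(k)}(γ, ν^{(k)}). Then d_WL^(k)((𝒳,ℓ_X),(𝒴,ℓ_Y)) ≤ d_GW^(k)((𝒳,d_X),(𝒴,d_Y)). -/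

import Mathlib

/-!
Composing the one-step couplings of a `k`-step coupling `ν` level by level yields feasible plans
for every stage of the Weisfeiler–Lehman recursion, so `D_k(x, y)` is at most the label cost
`∑ d_Z(ℓ_X x', ℓ_Y y') ν_{x,y}(x', y')`. Averaging against any `γ ∈ 𝒞(μ_X, μ_Y)` and applying
the stability inequality bounds `d_WL^(k)` by `dis^(k)(γ, ν)`; the infimum over the pairs
`(γ, ν)`, which exist because product measures are couplings, gives the claim.
-/

open scoped BigOperators NNReal

namespace WLGW

variable {X Y W : Type*}

/-- A probability mass function on a finite type. -/
def IsPMF [Fintype X] (p : X → ℝ) : Prop :=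
  (∀ x, 0 ≤ p x) ∧ ∑ x, p x = 1

/-- `γ` is a coupling of `p` and `q`. -/
def IsCoupling [Fintype X] [Fintype Y] (p : X → ℝ) (q : Y → ℝ) (γ : X → Y → ℝ) : Prop :=
  (∀ x y, 0 ≤ γ x y) ∧ (∀ x, ∑ y, γ x y = p x) ∧ (∀ y, ∑ x, γ x y = q y)

/-- `(m, μ)` is a measure Markov chain: each `m x` is a pmf, and `μ` is a fully supported
stationary pmf. -/
def IsMMC [Fintype X] (m : X → X → ℝ) (μ : X → ℝ) : Prop :=
  (∀ x, IsPMF (m x)) ∧ IsPMF μ ∧ (∀ x, 0 < μ x) ∧ (∀ x', ∑ x, m x x' * μ x = μ x')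

/-- `dX` is a metric on the finite type `X`. -/
def IsMetricOn [Fintype X] (dX : X → X → ℝ) : Prop :=
  (∀ x, dX x x = 0) ∧ (∀ x y, dX x y = dX y x) ∧ (∀ x y, x ≠ y → 0 < dX x y) ∧
    (∀ x y z, dX x z ≤ dX x y + dX y z)

/-- The iterated Weisfeiler–Lehman cost `D_k`. -/
noncomputable def costIter [Fintype X] [Fintype Y] (mX : X → X → ℝ) (mY : Y → Y → ℝ)
    (D0 : X → Y → ℝ) : ℕ → X → Y → ℝ
  | 0 => D0
  | k + 1 => fun x y => sInf {r : ℝ | ∃ γ : X → Y → ℝ, IsCoupling (mX x) (mY y) γ ∧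
      r = ∑ x', ∑ y', costIter mX mY D0 k x' y' * γ x' y'}

/-- The Weisfeiler–Lehman distance of depth `k` between two labeled measure Markov chains. -/
noncomputable def dWL {Z : Type*} [PseudoMetricSpace Z] [Fintype X] [Fintype Y]
    (mX : X → X → ℝ) (μX : X → ℝ) (ℓX : X → Z)
    (mY : Y → Y → ℝ) (μY : Y → ℝ) (ℓY : Y → Z) (k : ℕ) : ℝ :=
  sInf {r : ℝ | ∃ γ : X → Y → ℝ, IsCoupling μX μY γ ∧
      r = ∑ x, ∑ y, costIter mX mY (fun x y => dist (ℓX x) (ℓY y)) k x y * γ x y}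

/-- The absolute Weisfeiler–Lehman distance. -/
noncomputable def dWLsup {Z : Type*} [PseudoMetricSpace Z] [Fintype X] [Fintype Y]
    (mX : X → X → ℝ) (μX : X → ℝ) (ℓX : X → Z)
    (mY : Y → Y → ℝ) (μY : Y → ℝ) (ℓY : Y → Z) : ℝ :=
  ⨆ k : ℕ, dWL mX μX ℓX mY μY ℓY k

/-- Isomorphism of labeled measure Markov chains. -/
def LMMCIso {Z : Type*} [Fintype X] [Fintype Y]
    (mX : X → X → ℝ) (μX : X → ℝ) (ℓX : X → Z)
    (mY : Y → Y → ℝ) (μY : Y → ℝ) (ℓY : Y → Z) : Prop :=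
  ∃ ψ : X ≃ Y, (∀ x, ℓY (ψ x) = ℓX x) ∧ (∀ x x', mY (ψ x) (ψ x') = mX x x') ∧
    (∀ x, μY (ψ x) = μX x)

/-- The `q`-Markov kernel of a finite simple graph. -/
noncomputable def graphKernel {V : Type*} [Fintype V] [DecidableEq V] (G : SimpleGraph V) [DecidableRel G.Adj]
    (q : ℝ) (v v' : V) : ℝ :=
  if G.degree v = 0 then (if v' = v then 1 else 0)
  else (if v' = v then q else 0) + (if G.Adj v v' then (1 - q) / (G.degree v : ℝ) else 0)

/-- The stationary degree measure of a finite simple graph. -/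
noncomputable def graphMu {V : Type*} [Fintype V] (G : SimpleGraph V) [DecidableRel G.Adj]
    (v : V) : ℝ :=
  ((max (G.degree v) 1 : ℕ) : ℝ) / ∑ v', ((max (G.degree v') 1 : ℕ) : ℝ)

/-- The type of depth-`k` Weisfeiler–Lehman labels over an initial label set `Z`. -/
def WLType (Z : Type*) : ℕ → Type _
  | 0 => Z
  | k + 1 => WLType Z k × Multiset (WLType Z k)

/-- The Weisfeiler–Lehman label hierarchy `ℓ^k` of a labeled graph. -/
def wlLabel {V Z : Type*} [Fintype V] (G : SimpleGraph V) [DecidableRel G.Adj] (ℓ : V → Z) :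
    (k : ℕ) → V → WLType Z k
  | 0 => ℓ
  | k + 1 => fun v => (wlLabel G ℓ k v, (G.neighborFinset v).val.map (wlLabel G ℓ k))

/-- The multiset `L_k((G, ℓ))` of depth-`k` WL labels of all vertices. -/
def wlMultiset {V Z : Type*} [Fintype V] (G : SimpleGraph V) [DecidableRel G.Adj]
    (ℓ : V → Z) (k : ℕ) : Multiset (WLType Z k) :=
  Finset.univ.val.map (wlLabel G ℓ k)

/-- The WL test distinguishes two labeled graphs. -/
def WLDistinguishes {V₁ V₂ Z : Type*} [Fintype V₁] [Fintype V₂]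
    (G₁ : SimpleGraph V₁) [DecidableRel G₁.Adj] (ℓ₁ : V₁ → Z)
    (G₂ : SimpleGraph V₂) [DecidableRel G₂.Adj] (ℓ₂ : V₂ → Z) : Prop :=
  ∃ k, wlMultiset G₁ ℓ₁ k ≠ wlMultiset G₂ ℓ₂ k

/-- The relabeling `ℓ^g(v) = g(ℓ(v), deg v, |V|)`. -/
def relabel {V Z Z₁ : Type*} [Fintype V] (G : SimpleGraph V) [DecidableRel G.Adj]
    (ℓ : V → Z) (g : Z × ℕ × ℕ → Z₁) : V → Z₁ :=
  fun v => g (ℓ v, G.degree v, Fintype.card V)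

/-- `kpow m k = m^{⊗k}`, the `k`-step Markov kernel (`kpow m 0` is the identity kernel). -/
def kpow [Fintype X] [DecidableEq X] (m : X → X → ℝ) : ℕ → X → X → ℝ
  | 0 => fun x x' => if x' = x then 1 else 0
  | k + 1 => fun x x'' => ∑ x', kpow m k x' x'' * m x x'

/-- The Wasserstein distance between the pushforwards `(ℓX)_# p` and `(ℓY)_# q`, expressed
through couplings of `p` and `q`. -/
noncomputable def wassersteinCost {Z : Type*} [PseudoMetricSpace Z] [Fintype X] [Fintype Y]
    (ℓX : X → Z) (ℓY : Y → Z) (p : X → ℝ) (q : Y → ℝ) : ℝ :=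
  sInf {r : ℝ | ∃ γ : X → Y → ℝ, IsCoupling p q γ ∧
      r = ∑ x, ∑ y, dist (ℓX x) (ℓY y) * γ x y}

/-- The lower bound `d_WLLB^(k)` for the WL distance. -/
noncomputable def dWLLB {Z : Type*} [PseudoMetricSpace Z] [Fintype X] [Fintype Y]
    [DecidableEq X] [DecidableEq Y]
    (mX : X → X → ℝ) (μX : X → ℝ) (ℓX : X → Z)
    (mY : Y → Y → ℝ) (μY : Y → ℝ) (ℓY : Y → Z) (k : ℕ) : ℝ :=
  sInf {r : ℝ | ∃ γ : X → Y → ℝ, IsCoupling μX μY γ ∧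
      r = ∑ x, ∑ y, wassersteinCost ℓX ℓY (kpow mX k x) (kpow mY k y) * γ x y}

/-- Dimension sequence of an MCNN: `mcnnDim d dims 0 = d`, then `dims`. -/
def mcnnDim (d : ℕ) (dims : ℕ → ℕ) : ℕ → ℕ
  | 0 => d
  | i + 1 => dims i

/-- A `k`-layer Markov chain neural network on `ℝ^d`-LMMCs: Lipschitz maps `φ_1, …, φ_{k+1}`
followed by a continuous map `ψ`. -/
structure MCNN (d k : ℕ) where
  dims : ℕ → ℕ
  φ : (i : ℕ) → EuclideanSpace ℝ (Fin (mcnnDim d dims i)) →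
      EuclideanSpace ℝ (Fin (mcnnDim d dims (i + 1)))
  φ_lip : ∀ i, ∃ K : ℝ≥0, LipschitzWith K (φ i)
  ψ : EuclideanSpace ℝ (Fin (mcnnDim d dims (k + 1))) → ℝ
  ψ_cont : Continuous ψ

/-- Labels after `j` layers of an MCNN (the map `F_{φ_j} ∘ ⋯ ∘ F_{φ_1}`). -/
noncomputable def mcnnLabel {X : Type*} [Fintype X] {d k : ℕ} (N : MCNN d k)
    (m : X → X → ℝ) (ℓ : X → EuclideanSpace ℝ (Fin d)) :
    (j : ℕ) → X → EuclideanSpace ℝ (Fin (mcnnDim d N.dims j))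
  | 0 => ℓ
  | j + 1 => fun x => ∑ x', m x x' • N.φ j (mcnnLabel N m ℓ j x')

/-- Evaluation of an MCNN on an `ℝ^d`-LMMC: `ψ ∘ S_{φ_{k+1}} ∘ F_{φ_k} ∘ ⋯ ∘ F_{φ_1}`. -/
noncomputable def mcnnEval {X : Type*} [Fintype X] {d k : ℕ} (N : MCNN d k)
    (m : X → X → ℝ) (μ : X → ℝ) (ℓ : X → EuclideanSpace ℝ (Fin d)) : ℝ :=
  N.ψ (∑ x, μ x • N.φ k (mcnnLabel N m ℓ k x))

/-- `k`-step couplings between the Markov kernels `mX` and `mY` (defined for `k ≥ 1`). -/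
def IsStepCoupling [Fintype X] [Fintype Y] (mX : X → X → ℝ) (mY : Y → Y → ℝ) :
    ℕ → (X → Y → X → Y → ℝ) → Prop
  | 0, _ => False
  | 1, ν => ∀ x y, IsCoupling (mX x) (mY y) (ν x y)
  | k + 2, ν => ∃ νk ν1 : X → Y → X → Y → ℝ,
      IsStepCoupling mX mY (k + 1) νk ∧ (∀ x y, IsCoupling (mX x) (mY y) (ν1 x y)) ∧
      ν = fun x y x' y' => ∑ x'', ∑ y'', νk x'' y'' x' y' * ν1 x y x'' y''

/-- The `k`-distortion `dis^(k)(γ, ν)`. -/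
def disk [Fintype X] [Fintype Y] (dX : X → X → ℝ) (dY : Y → Y → ℝ)
    (γ : X → Y → ℝ) (ν : X → Y → X → Y → ℝ) : ℝ :=
  ∑ x, ∑ y, ∑ x'', ∑ y'', ∑ x', ∑ y',
    |dX x x' - dY y y'| * ν x'' y'' x' y' * γ x'' y'' * γ x y

/-- The `k`-Gromov–Wasserstein distance between Markov chain metric spaces. -/
noncomputable def dGWk [Fintype X] [Fintype Y]
    (mX : X → X → ℝ) (dX : X → X → ℝ) (μX : X → ℝ)
    (mY : Y → Y → ℝ) (dY : Y → Y → ℝ) (μY : Y → ℝ) (k : ℕ) : ℝ :=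
  sInf {r : ℝ | ∃ (γ : X → Y → ℝ) (ν : X → Y → X → Y → ℝ),
      IsCoupling μX μY γ ∧ IsStepCoupling mX mY k ν ∧ r = disk dX dY γ ν}

/-- The absolute Gromov–Wasserstein distance between MCMSs: `sup_{k ≥ 1} d_GW^(k)`. -/
noncomputable def dGWMCMS [Fintype X] [Fintype Y]
    (mX : X → X → ℝ) (dX : X → X → ℝ) (μX : X → ℝ)
    (mY : Y → Y → ℝ) (dY : Y → Y → ℝ) (μY : Y → ℝ) : ℝ :=
  ⨆ k : ℕ, dGWk mX dX μX mY dY μY (k + 1)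

/-- Isomorphism of Markov chain metric spaces. -/
def MCMSIso [Fintype X] [Fintype Y]
    (mX : X → X → ℝ) (dX : X → X → ℝ) (μX : X → ℝ)
    (mY : Y → Y → ℝ) (dY : Y → Y → ℝ) (μY : Y → ℝ) : Prop :=
  ∃ ψ : X ≃ Y, (∀ x x', dY (ψ x) (ψ x') = dX x x') ∧
    (∀ x x', mY (ψ x) (ψ x') = mX x x') ∧ (∀ x, μY (ψ x) = μX x)

/-- The decoupled Gromov–Wasserstein distance between finite metric measure spaces. -/
noncomputable def dGWbi [Fintype X] [Fintype Y]
    (dX : X → X → ℝ) (μX : X → ℝ) (dY : Y → Y → ℝ) (μY : Y → ℝ) : ℝ :=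
  sInf {r : ℝ | ∃ γ γ' : X → Y → ℝ, IsCoupling μX μY γ ∧ IsCoupling μX μY γ' ∧
      r = ∑ x, ∑ y, ∑ x', ∑ y', |dX x x' - dY y y'| * γ' x' y' * γ x y}

/-- `k`-step couplings between the measures `μX` and `μY`
(`k = 0` gives ordinary couplings). -/
def IsMeasureStepCoupling [Fintype X] [Fintype Y] (mX : X → X → ℝ) (mY : Y → Y → ℝ)
    (μX : X → ℝ) (μY : Y → ℝ) : ℕ → (X → Y → ℝ) → Prop
  | 0, γ => IsCoupling μX μY γ
  | k + 1, γk => ∃ (γ : X → Y → ℝ) (ν : X → Y → X → Y → ℝ),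
      IsCoupling μX μY γ ∧ IsStepCoupling mX mY (k + 1) ν ∧
      γk = fun x' y' => ∑ x, ∑ y, ν x y x' y' * γ x y

/-- The WWL label iteration. -/
noncomputable def wwlLabel {V : Type*} [Fintype V] {d : ℕ} (G : SimpleGraph V)
    [DecidableRel G.Adj] (ℓ : V → EuclideanSpace ℝ (Fin d)) :
    ℕ → V → EuclideanSpace ℝ (Fin d)
  | 0 => ℓ
  | i + 1 => fun v => (1 / 2 : ℝ) •
      (wwlLabel G ℓ i v + ((G.degree v : ℝ))⁻¹ • ∑ v' ∈ G.neighborFinset v, wwlLabel G ℓ i v')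

/-- The stacked WWL label `L^k_G = (ℓ^0, …, ℓ^k)`, valued in Euclidean `ℝ^{d(k+1)}`. -/
noncomputable def stackedLabel {V : Type*} [Fintype V] {d : ℕ} (G : SimpleGraph V)
    [DecidableRel G.Adj] (ℓ : V → EuclideanSpace ℝ (Fin d)) (k : ℕ) (v : V) :
    EuclideanSpace ℝ (Fin (k + 1) × Fin d) :=
  WithLp.toLp 2 fun p => wwlLabel G ℓ (p.1 : ℕ) v p.2

lemma sum_sum_comm_sum_sum {α β γ δ M : Type*} [Fintype α] [Fintype β] [Fintype γ] [Fintype δ]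
    [AddCommMonoid M] (F : α → β → γ → δ → M) :
    ∑ a, ∑ b, ∑ c, ∑ d, F a b c d = ∑ c, ∑ d, ∑ a, ∑ b, F a b c d := by
  simpa only [Fintype.sum_prod_type] using
    Finset.sum_comm (s := (Finset.univ : Finset (α × β))) (t := (Finset.univ : Finset (γ × δ)))
      (f := fun p q => F p.1 p.2 q.1 q.2)

section Transport

variable [Fintype X] [Fintype Y]

/-- Both `costIter mX mY D0 (k + 1) x y` and `dWL` are definitionally of this form. -/
noncomputable def optimalTransportCost (p : X → ℝ) (q : Y → ℝ) (c : X → Y → ℝ) : ℝ :=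
  sInf {r : ℝ | ∃ γ : X → Y → ℝ, IsCoupling p q γ ∧ r = ∑ x, ∑ y, c x y * γ x y}

lemma IsPMF.isCoupling_mul {p : X → ℝ} {q : Y → ℝ} (hp : IsPMF p) (hq : IsPMF q) :
    IsCoupling p q fun x y => p x * q y :=
  ⟨fun x y => mul_nonneg (hp.1 x) (hq.1 y),
    fun x => by rw [← Finset.mul_sum, hq.2, mul_one],
    fun y => by rw [← Finset.sum_mul, hp.2, one_mul]⟩

lemma IsCoupling.sum_mul_nonneg {p : X → ℝ} {q : Y → ℝ} {γ : X → Y → ℝ} {c : X → Y → ℝ}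
    (hγ : IsCoupling p q γ) (hc : ∀ x y, 0 ≤ c x y) : 0 ≤ ∑ x, ∑ y, c x y * γ x y :=
  Finset.sum_nonneg fun x _ => Finset.sum_nonneg fun y _ => mul_nonneg (hc x y) (hγ.1 x y)

lemma IsCoupling.sum_mul_le_sum_mul {p : X → ℝ} {q : Y → ℝ} {γ : X → Y → ℝ}
    {c c' : X → Y → ℝ} (hγ : IsCoupling p q γ) (h : ∀ x y, c x y ≤ c' x y) :
    ∑ x, ∑ y, c x y * γ x y ≤ ∑ x, ∑ y, c' x y * γ x y :=
  Finset.sum_le_sum fun x _ => Finset.sum_le_sum fun y _ =>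
    mul_le_mul_of_nonneg_right (h x y) (hγ.1 x y)

lemma optimalTransportCost_nonneg {p : X → ℝ} {q : Y → ℝ} {c : X → Y → ℝ}
    (hc : ∀ x y, 0 ≤ c x y) : 0 ≤ optimalTransportCost p q c :=
  Real.sInf_nonneg <| by
    rintro _ ⟨γ, hγ, rfl⟩
    exact hγ.sum_mul_nonneg hc

lemma optimalTransportCost_le {p : X → ℝ} {q : Y → ℝ} {γ : X → Y → ℝ} {c : X → Y → ℝ}
    (hc : ∀ x y, 0 ≤ c x y) (hγ : IsCoupling p q γ) :
    optimalTransportCost p q c ≤ ∑ x, ∑ y, c x y * γ x y := by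
  refine csInf_le ⟨0, ?_⟩ ⟨γ, hγ, rfl⟩
  rintro _ ⟨γ', hγ', rfl⟩
  exact hγ'.sum_mul_nonneg hc

end Transport

section WeisfeilerLehman

variable [Fintype X] [Fintype Y] {mX : X → X → ℝ} {mY : Y → Y → ℝ} {D0 : X → Y → ℝ}

lemma costIter_nonneg (hD0 : ∀ x y, 0 ≤ D0 x y) (k : ℕ) (x : X) (y : Y) :
    0 ≤ costIter mX mY D0 k x y := by
  induction k generalizing x y with
  | zero => exact hD0 x y
  | succ k ih => exact optimalTransportCost_nonneg ih

lemma costIter_le_of_isStepCoupling (hD0 : ∀ x y, 0 ≤ D0 x y) :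
    ∀ (k : ℕ) (ν : X → Y → X → Y → ℝ), IsStepCoupling mX mY k ν → ∀ x y,
      costIter mX mY D0 k x y ≤ ∑ x', ∑ y', D0 x' y' * ν x y x' y'
  | 1, ν, hν, x, y => optimalTransportCost_le hD0 (hν x y)
  | k + 2, _, ⟨νk, ν1, hνk, hν1, rfl⟩, x, y => by
    calc costIter mX mY D0 (k + 2) x y
        ≤ ∑ x'', ∑ y'', costIter mX mY D0 (k + 1) x'' y'' * ν1 x y x'' y'' :=
          optimalTransportCost_le (costIter_nonneg hD0 _) (hν1 x y)
      _ ≤ ∑ x'', ∑ y'', (∑ x', ∑ y', D0 x' y' * νk x'' y'' x' y') * ν1 x y x'' y'' :=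
          (hν1 x y).sum_mul_le_sum_mul (costIter_le_of_isStepCoupling hD0 (k + 1) νk hνk)
      _ = ∑ x', ∑ y', D0 x' y' * ∑ x'', ∑ y'', νk x'' y'' x' y' * ν1 x y x'' y'' := by
          simp only [Finset.sum_mul, Finset.mul_sum, mul_assoc]
          exact sum_sum_comm_sum_sum _

lemma exists_isStepCoupling (hmX : ∀ x, IsPMF (mX x)) (hmY : ∀ y, IsPMF (mY y)) :
    ∀ k : ℕ, 1 ≤ k → ∃ ν : X → Y → X → Y → ℝ, IsStepCoupling mX mY k ν
  | 1, _ => ⟨_, fun x y => (hmX x).isCoupling_mul (hmY y)⟩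
  | k + 2, _ =>
    have ⟨νk, hνk⟩ := exists_isStepCoupling hmX hmY (k + 1) k.succ_pos
    ⟨_, νk, _, hνk, fun x y => (hmX x).isCoupling_mul (hmY y), rfl⟩

end WeisfeilerLehman

theorem stable_label_dWL_le_dGWk_general {X Y Z : Type*} [Fintype X] [Fintype Y] [MetricSpace Z]
    (mX : X → X → ℝ) (dX : X → X → ℝ) (μX : X → ℝ) (ℓX : X → Z)
    (mY : Y → Y → ℝ) (dY : Y → Y → ℝ) (μY : Y → ℝ) (ℓY : Y → Z)
    (hX : IsMMC mX μX) (hY : IsMMC mY μY)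
    (k : ℕ) (hk : 1 ≤ k)
    (hstable : ∀ (γ : X → Y → ℝ) (ν : X → Y → X → Y → ℝ),
      IsCoupling μX μY γ → IsStepCoupling mX mY k ν →
      ∑ x, ∑ y, ∑ x', ∑ y', dist (ℓX x') (ℓY y') * ν x y x' y' * γ x y ≤ disk dX dY γ ν) :
    dWL mX μX ℓX mY μY ℓY k ≤ dGWk mX dX μX mY dY μY k := by
  have hD : ∀ x y, 0 ≤ costIter mX mY (fun x y => dist (ℓX x) (ℓY y)) k x y :=
    costIter_nonneg (fun _ _ => dist_nonneg) k
  obtain ⟨ν₀, hν₀⟩ := exists_isStepCoupling hX.1 hY.1 k hk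
  refine le_csInf ⟨_, _, ν₀, hX.2.1.isCoupling_mul hY.2.1, hν₀, rfl⟩ ?_
  rintro _ ⟨γ, ν, hγ, hν, rfl⟩
  calc dWL mX μX ℓX mY μY ℓY k
      ≤ ∑ x, ∑ y, costIter mX mY (fun x y => dist (ℓX x) (ℓY y)) k x y * γ x y :=
        optimalTransportCost_le hD hγ
    _ ≤ ∑ x, ∑ y, (∑ x', ∑ y', dist (ℓX x') (ℓY y') * ν x y x' y') * γ x y :=
        hγ.sum_mul_le_sum_mul (costIter_le_of_isStepCoupling (fun _ _ => dist_nonneg) k ν hν)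
    _ = ∑ x, ∑ y, ∑ x', ∑ y', dist (ℓX x') (ℓY y') * ν x y x' y' * γ x y := by
        simp only [Finset.sum_mul]
    _ ≤ disk dX dY γ ν := hstable γ ν hγ hν

theorem stable_label_dWL_le_dGWk {X Y Z : Type*} [Fintype X] [Fintype Y] [MetricSpace Z]
    (mX : X → X → ℝ) (dX : X → X → ℝ) (μX : X → ℝ) (ℓX : X → Z)
    (mY : Y → Y → ℝ) (dY : Y → Y → ℝ) (μY : Y → ℝ) (ℓY : Y → Z)
    (hX : IsMMC mX μX) (hY : IsMMC mY μY)
    (hdX : IsMetricOn dX) (hdY : IsMetricOn dY)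
    (k : ℕ) (hk : 1 ≤ k)
    (hstable : ∀ (γ : X → Y → ℝ) (ν : X → Y → X → Y → ℝ),
      IsCoupling μX μY γ → IsStepCoupling mX mY k ν →
      ∑ x, ∑ y, ∑ x', ∑ y', dist (ℓX x') (ℓY y') * ν x y x' y' * γ x y ≤ disk dX dY γ ν) :
    dWL mX μX ℓX mY μY ℓY k ≤ dGWk mX dX μX mY dY μY k :=
  stable_label_dWL_le_dGWk_general mX dX μX ℓX mY dY μY ℓY hX hY k hk hstable

end WLGW
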